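/- Let C be a Type I code of length n over Z_{2^m} with n ≡ 2 (mod 4). Write C = C_0 ∪ C_2 and C_0^⊥ = C_0 ∪ C_1 ∪ C_2 ∪ C_3 for the four cosets of the doubly-even subcode C_0. Then for all x ∈ C_1 and y ∈ C_1, x·y ≡ 2^{m−1} (mod 2^m); for x ∈ C_1, y ∈ C_2, x·y ≡ 2^{m−1} (mod 2^m); for x ∈ C_1, y ∈ C_3, x·y ≡ 0 (mod 2^m); and for x, y ∈ C_2, x·y ≡ 0 (mod 2^m). -/

import Mathlib

open Finset

/-- Standard bilinear (dot) product on `Fin n → R`. -/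
def dotp {R : Type*} [CommRing R] {n : ℕ} (u v : Fin n → R) : R := ∑ i, u i * v i

/-- Dual of a set of vectors with respect to the standard bilinear form. -/
def dualCode {R : Type*} [CommRing R] {n : ℕ} (S : Set (Fin n → R)) : Set (Fin n → R) :=
  {v | ∀ u ∈ S, dotp u v = 0}

/-- Euclidean weight of an element of `ZMod N`. -/
def wtE {N : ℕ} (a : ZMod N) : ℕ := min (a.val ^ 2) ((N - a.val) ^ 2)

/-- Euclidean weight of a vector. -/
def wtEv {N n : ℕ} (v : Fin n → ZMod N) : ℕ := ∑ i, wtE (v i)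

/-- Doubly-even subcode (as a set): codewords of Euclidean weight divisible by 2^(m+1). -/
def deSub (m n : ℕ) (C : AddSubgroup (Fin n → ZMod (2 ^ m))) : Set (Fin n → ZMod (2 ^ m)) :=
  {c | c ∈ C ∧ 2 ^ (m + 1) ∣ wtEv c}

/-!
For `c ∈ C` the integer `liftDot c c`, the norm of the canonical lift of `c`, is divisible by
`2^m`, and `C₀` consists of the `c` for which it is divisible by `2^(m+1)`. As `2t ∈ C₀`, the
value `t·s` has order at most two; it is nonzero, since otherwise `s` would be orthogonal to
`C = C₀ ∪ (t + C₀)` and hence lie in `C^⊥ = C`. So `c·s = 2^(m-1)` for every `c ∈ C₂`, which makes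
`s` a characteristic vector: `liftDot c c + 2 liftDot s c ≡ 0 (mod 2^(m+1))` on `C`.

The value of `s·s` is forced by a quadratic Gauss sum. Averaging
`e(u) = exp(2πi · liftDot u u / 2^(m+1))` over the translates `u + c`, `c ∈ C`, the characteristic
vector turns the phase into the character `c ↦ exp(2πi (u - s)·c / 2^m)`, and orthogonality gives
`∑ᵤ e(u) = |C| e(s)`. The left side factors as `gⁿ` for the Gauss sum `g` over `ℤ/2^m`, and
`g² = 2^m i`; so for `n ≡ 2 (mod 4)` its square is `-2^(mn)`, forcing
`exp(2πi (s·s) / 2^m) = -1`. The four relations then follow by bilinearity.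
-/

open Function Complex

section PeriodicSums

variable {M : Type*} {f : ℤ → M} {N : ℕ}

lemma Function.Periodic.sum_range_add_int [AddCommGroup M] (hf : Periodic f N) (c : ℤ) :
    ∑ i ∈ range N, f (i + c) = ∑ i ∈ range N, f i := by
  have step : ∀ c : ℤ, ∑ i ∈ range N, f (i + (c + 1)) = ∑ i ∈ range N, f (i + c) := by
    intro c
    have h := (sum_range_succ' (fun i : ℕ => f (i + c)) N).symm.trans
      (sum_range_succ (fun i : ℕ => f (i + c)) N)
    have hN : f ((N : ℤ) + c) = f ((0 : ℕ) + c) := by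
      rw [Nat.cast_zero, zero_add, add_comm, hf c]
    rw [hN, add_left_inj] at h
    simpa only [Nat.cast_succ, add_assoc, add_comm (1 : ℤ)] using h
  induction c using Int.induction_on with
  | zero => simp
  | succ c ih => rw [step, ih]
  | pred c ih => rw [← ih, ← step, sub_add_cancel]

lemma Function.Periodic.sum_range_two_mul [AddCommMonoid M] (hf : Periodic f N) :
    ∑ i ∈ range (2 * N), f i = 2 • ∑ i ∈ range N, f i := by
  rw [two_mul, sum_range_add, two_nsmul]
  congr 1
  refine sum_congr rfl fun i _ => ?_
  rw [Nat.cast_add, add_comm, hf]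

lemma Function.Antiperiodic.sum_range_two_mul [AddCommGroup M] (hf : Antiperiodic f N) :
    ∑ i ∈ range (2 * N), f i = 0 := by
  rw [two_mul, sum_range_add, ← sum_add_distrib]
  refine sum_eq_zero fun i _ => ?_
  rw [Nat.cast_add, add_comm (N : ℤ), hf, add_neg_cancel]

lemma Finset.sum_range_two_mul_eq_add [AddCommMonoid M] (g : ℕ → M) (N : ℕ) :
    ∑ i ∈ range (2 * N), g i = ∑ i ∈ range N, g (2 * i) + ∑ i ∈ range N, g (2 * i + 1) := by
  induction N with
  | zero => simp
  | succ N ih =>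
    rw [mul_add, mul_one, sum_range_succ, sum_range_succ, ih, sum_range_succ, sum_range_succ]
    abel

end PeriodicSums

noncomputable def expDyadic (k : ℕ) (j : ℤ) : ℂ := ZMod.stdAddChar (j : ZMod (2 ^ k))

lemma expDyadic_apply (k : ℕ) (j : ℤ) : expDyadic k j = exp (2 * Real.pi * I * j / 2 ^ k) := by
  rw [expDyadic, ZMod.stdAddChar_coe]; push_cast; rfl

lemma expDyadic_add (k : ℕ) (a b : ℤ) : expDyadic k (a + b) = expDyadic k a * expDyadic k b := by
  rw [expDyadic, Int.cast_add, AddChar.map_add_eq_mul]; rfl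

lemma expDyadic_zero (k : ℕ) : expDyadic k 0 = 1 := by
  rw [expDyadic, Int.cast_zero, AddChar.map_zero_eq_one]

lemma expDyadic_sum (k : ℕ) {ι : Type*} (s : Finset ι) (f : ι → ℤ) :
    expDyadic k (∑ i ∈ s, f i) = ∏ i ∈ s, expDyadic k (f i) := by
  induction s using Finset.cons_induction with
  | empty => rw [sum_empty, prod_empty, expDyadic_zero]
  | cons a s _ ih => rw [sum_cons, prod_cons, expDyadic_add, ih]

lemma expDyadic_eq_of_modEq {k : ℕ} {a b : ℤ} (h : a ≡ b [ZMOD 2 ^ k]) :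
    expDyadic k a = expDyadic k b := by
  rw [expDyadic, expDyadic, (ZMod.intCast_eq_intCast_iff a b _).2 (by exact_mod_cast h)]

lemma expDyadic_succ_two_mul (k : ℕ) (j : ℤ) : expDyadic (k + 1) (2 * j) = expDyadic k j := by
  rw [expDyadic_apply, expDyadic_apply]
  congr 1
  push_cast
  field_simp
  ring

lemma expDyadic_succ_two_pow (k : ℕ) : expDyadic (k + 1) (2 ^ k) = -1 := by
  rw [expDyadic_apply, ← exp_pi_mul_I]
  congr 1
  field_simp
  push_cast
  ring

lemma expDyadic_two_one : expDyadic 2 1 = I := by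
  rw [expDyadic_apply]
  conv_rhs => rw [← exp_pi_div_two_mul_I]
  congr 1
  push_cast
  ring

noncomputable def dyadicGaussSum (k : ℕ) : ℂ := ∑ i ∈ range (2 ^ k), expDyadic (k + 1) ((i : ℤ) ^ 2)

lemma periodic_expDyadic_sq {k : ℕ} (hk : 1 ≤ k) :
    Periodic (fun x : ℤ => expDyadic (k + 1) (x ^ 2)) ((2 ^ k : ℕ) : ℤ) := by
  obtain ⟨j, rfl⟩ := Nat.exists_eq_add_of_le' hk
  intro x
  refine expDyadic_eq_of_modEq ((Int.modEq_iff_dvd.2 ⟨-(x + 2 ^ j), ?_⟩))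
  push_cast
  ring

lemma antiperiodic_expDyadic_sub_sq_add_sq {k : ℕ} (hk : 1 ≤ k) {a : ℤ} (ha : Odd a) :
    Antiperiodic (fun y : ℤ => expDyadic (k + 2) ((a - y) ^ 2 + y ^ 2)) ((2 ^ k : ℕ) : ℤ) := by
  obtain ⟨j, rfl⟩ := Nat.exists_eq_add_of_le' hk
  obtain ⟨b, rfl⟩ := ha
  intro y
  have h : (2 * b + 1 - (y + ((2 ^ (j + 1) : ℕ) : ℤ))) ^ 2 + (y + ((2 ^ (j + 1) : ℕ) : ℤ)) ^ 2 ≡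
      ((2 * b + 1 - y) ^ 2 + y ^ 2) + 2 ^ (j + 1 + 1) [ZMOD 2 ^ (j + 1 + 2)] :=
    Int.modEq_iff_dvd.2 ⟨b + 1 - y - 2 ^ j, by push_cast; ring⟩
  beta_reduce
  rw [expDyadic_eq_of_modEq h, expDyadic_add, expDyadic_succ_two_pow, mul_neg_one]

lemma sum_range_two_pow_succ_expDyadic_sub_sq {k : ℕ} (hk : 1 ≤ k) (c : ℤ) :
    ∑ i ∈ range (2 ^ (k + 1)), expDyadic (k + 1) ((i - c) ^ 2) = 2 * dyadicGaussSum k := by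
  have hper := periodic_expDyadic_sq hk
  rw [pow_succ', Function.Periodic.sum_range_two_mul (f := fun x => expDyadic (k + 1) ((x - c) ^ 2))
    (hper.sub_const c), two_nsmul, two_mul]
  simp only [sub_eq_add_neg]
  rw [hper.sum_range_add_int]
  rfl

lemma dyadicGaussSum_succ_sq {k : ℕ} (hk : 1 ≤ k) :
    dyadicGaussSum (k + 1) ^ 2 = 2 * dyadicGaussSum k ^ 2 := by
  have hsq : dyadicGaussSum (k + 1) ^ 2 = ∑ x ∈ range (2 ^ (k + 1)), ∑ y ∈ range (2 ^ (k + 1)),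
      expDyadic (k + 2) (((x : ℤ) - y) ^ 2 + (y : ℤ) ^ 2) := by
    rw [sq, dyadicGaussSum, sum_mul_sum, sum_comm]
    conv_rhs => rw [sum_comm]
    refine sum_congr rfl fun y _ => ?_
    simp only [expDyadic_add, ← sum_mul, sub_eq_add_neg]
    congr 1
    exact ((periodic_expDyadic_sq (by omega : 1 ≤ k + 1)).sum_range_add_int _).symm
  -- After `x ↦ x - y`, a row with odd `x` cancels under `y ↦ y + 2^k`, and the row `x = 2w`
  -- is `2 g_k e_{k+1}(w²)`.
  have hodd : ∀ w : ℕ, ∑ y ∈ range (2 ^ (k + 1)),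
      expDyadic (k + 2) ((((2 * w + 1 : ℕ) : ℤ) - y) ^ 2 + (y : ℤ) ^ 2) = 0 := by
    intro w
    rw [pow_succ']
    exact (antiperiodic_expDyadic_sub_sq_add_sq hk ⟨w, by push_cast; ring⟩).sum_range_two_mul
  have heven : ∀ w : ℕ, ∑ y ∈ range (2 ^ (k + 1)),
      expDyadic (k + 2) ((((2 * w : ℕ) : ℤ) - y) ^ 2 + (y : ℤ) ^ 2)
        = 2 * dyadicGaussSum k * expDyadic (k + 1) ((w : ℤ) ^ 2) := by
    intro w
    have hsplit : ∀ y : ℤ, expDyadic (k + 2) ((((2 * w : ℕ) : ℤ) - y) ^ 2 + y ^ 2)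
        = expDyadic (k + 1) ((y - w) ^ 2) * expDyadic (k + 1) ((w : ℤ) ^ 2) := by
      intro y
      rw [← expDyadic_add, ← expDyadic_succ_two_mul (k + 1)]
      congr 1
      push_cast
      ring
    simp only [hsplit, ← sum_mul, sum_range_two_pow_succ_expDyadic_sub_sq hk]
  rw [hsq, pow_succ', Finset.sum_range_two_mul_eq_add, ← pow_succ']
  simp only [hodd, heven, sum_const_zero, add_zero, ← mul_sum]
  rw [← dyadicGaussSum]
  ring

lemma dyadicGaussSum_sq {k : ℕ} (hk : 1 ≤ k) : dyadicGaussSum k ^ 2 = 2 ^ k * I := by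
  induction k, hk using Nat.le_induction with
  | base =>
    have h1 : dyadicGaussSum 1 = 1 + I := by
      simp [dyadicGaussSum, sum_range_succ, expDyadic_two_one, expDyadic_zero]
    rw [h1, add_sq, I_sq]
    ring
  | succ k hk ih => rw [dyadicGaussSum_succ_sq hk, ih]; ring

lemma Int.ModEq.sq_two_mul {N a b : ℤ} (hN : 2 ∣ N) (h : a ≡ b [ZMOD N]) :
    a ^ 2 ≡ b ^ 2 [ZMOD 2 * N] := by
  obtain ⟨c, hc⟩ := (Int.modEq_iff_dvd.1 h)
  obtain ⟨d, rfl⟩ := hN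
  refine Int.modEq_iff_dvd.2 ⟨c * (a + d * c), ?_⟩
  rw [show b = a + 2 * d * c by linarith]
  ring

lemma ZMod.val_modEq_iff {N : ℕ} [NeZero N] (x : ZMod N) (j : ℤ) :
    (x.val : ℤ) ≡ j [ZMOD N] ↔ x = j := by
  rw [← ZMod.intCast_eq_intCast_iff, Int.cast_natCast, ZMod.natCast_zmod_val]

-- Unlike `dotp v v`, this integer is well defined modulo `2N` for even `N`, which is the
-- precision at which `wtEv` sees a vector.
def liftDot {N n : ℕ} (u v : Fin n → ZMod N) : ℤ := ∑ i, ((u i).val : ℤ) * (v i).val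

section LiftDot

variable {N n : ℕ}

lemma liftDot_comm (u v : Fin n → ZMod N) : liftDot u v = liftDot v u := by
  simp only [liftDot, mul_comm]

lemma intCast_liftDot [NeZero N] (u v : Fin n → ZMod N) :
    ((liftDot u v : ℤ) : ZMod N) = dotp u v := by
  simp [liftDot, dotp]

lemma liftDot_modEq_iff [NeZero N] (u v : Fin n → ZMod N) (j : ℤ) :
    liftDot u v ≡ j [ZMOD N] ↔ dotp u v = j := by
  rw [← ZMod.intCast_eq_intCast_iff, intCast_liftDot]

lemma dotp_eq_zero_iff_dvd_liftDot [NeZero N] (u v : Fin n → ZMod N) :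
    dotp u v = 0 ↔ (N : ℤ) ∣ liftDot u v := by
  rw [← intCast_liftDot, ZMod.intCast_zmod_eq_zero_iff_dvd]

lemma liftDot_add_self_modEq [NeZero N] (hN : 2 ∣ N) (u v : Fin n → ZMod N) :
    liftDot (u + v) (u + v) ≡ liftDot u u + liftDot v v + 2 * liftDot u v [ZMOD 2 * N] := by
  have h : liftDot u u + liftDot v v + 2 * liftDot u v
      = ∑ i, ((((u i).val : ℤ) + (v i).val) ^ 2) := by
    simp only [liftDot, mul_sum, ← sum_add_distrib]
    exact sum_congr rfl fun i _ => by ring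
  rw [h, liftDot]
  refine Int.ModEq.sum fun i _ => ?_
  rw [← sq]
  refine Int.ModEq.sq_two_mul (by exact_mod_cast hN) ?_
  rw [ZMod.val_modEq_iff]
  push_cast
  simp

lemma wtE_modEq [NeZero N] (hN : 2 ∣ N) (a : ZMod N) :
    (wtE a : ℤ) ≡ (a.val : ℤ) ^ 2 [ZMOD 2 * N] := by
  rw [wtE]
  rcases min_choice (a.val ^ 2) ((N - a.val) ^ 2) with h | h <;> rw [h]
  · push_cast; rfl
  · have hneg : ((N - a.val : ℕ) : ℤ) ≡ -(a.val : ℤ) [ZMOD N] :=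
      Int.modEq_iff_dvd.2 ⟨-1, by push_cast [(ZMod.val_lt a).le]; ring⟩
    simpa using Int.ModEq.sq_two_mul (by exact_mod_cast hN) hneg

lemma wtEv_modEq_liftDot [NeZero N] (hN : 2 ∣ N) (v : Fin n → ZMod N) :
    (wtEv v : ℤ) ≡ liftDot v v [ZMOD 2 * N] := by
  rw [wtEv, liftDot]
  push_cast
  exact Int.ModEq.sum fun i _ => by rw [← sq]; exact wtE_modEq hN (v i)

end LiftDot

lemma ZMod.eq_two_pow_pred_of_add_self_eq_zero {m : ℕ} {x : ZMod (2 ^ m)} (h : x + x = 0)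
    (hx : x ≠ 0) : x = 2 ^ (m - 1) := by
  obtain _ | j := m
  · exact absurd ((ZMod.val_eq_zero x).1 (Nat.lt_one_iff.1 (ZMod.val_lt x))) hx
  have hdvd : 2 ^ j ∣ x.val := by
    have h2 : ((2 * x.val : ℕ) : ZMod (2 ^ (j + 1))) = 0 := by
      push_cast; rw [ZMod.natCast_zmod_val, two_mul, h]
    rw [ZMod.natCast_eq_zero_iff] at h2
    exact Nat.dvd_of_mul_dvd_mul_left two_pos (pow_succ' 2 j ▸ h2)
  obtain ⟨q, hq⟩ := hdvd
  have hq1 : q = 1 := by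
    have hlt : 2 ^ j * q < 2 ^ j * 2 := hq ▸ (pow_succ 2 j ▸ ZMod.val_lt x)
    have hq0 : q ≠ 0 := by rintro rfl; exact hx ((ZMod.val_eq_zero x).1 hq)
    have := lt_of_mul_lt_mul_left hlt
    omega
  rw [← ZMod.natCast_zmod_val x, hq, hq1, mul_one, Nat.cast_pow, Nat.cast_ofNat,
    Nat.add_sub_cancel]

lemma ZMod.two_pow_pred_add_self {m : ℕ} (hm : 0 < m) :
    (2 ^ (m - 1) : ZMod (2 ^ m)) + 2 ^ (m - 1) = 0 := by
  rw [← two_mul, ← pow_succ', Nat.sub_add_cancel hm]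
  exact_mod_cast ZMod.natCast_self (2 ^ m)

lemma dotp_comm {R : Type*} [CommRing R] {n : ℕ} (u v : Fin n → R) : dotp u v = dotp v u :=
  dotProduct_comm u v

lemma dotp_add_left {R : Type*} [CommRing R] {n : ℕ} (u v w : Fin n → R) :
    dotp (u + v) w = dotp u w + dotp v w :=
  add_dotProduct u v w

lemma dotp_add_right {R : Type*} [CommRing R] {n : ℕ} (u v w : Fin n → R) :
    dotp u (v + w) = dotp u v + dotp u w :=
  dotProduct_add u v w

lemma dotp_sub_left {R : Type*} [CommRing R] {n : ℕ} (u v w : Fin n → R) :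
    dotp (u - v) w = dotp u w - dotp v w :=
  sub_dotProduct u v w

lemma dotp_add_add_eq {R : Type*} [CommRing R] {n : ℕ} {x y a b : Fin n → R} (hxb : dotp x b = 0)
    (hay : dotp a y = 0) (hab : dotp a b = 0) : dotp (x + a) (y + b) = dotp x y := by
  rw [dotp_add_left, dotp_add_right, dotp_add_right, hxb, hay, hab, add_zero, add_zero, add_zero]

section SelfOrthogonal

variable {m n : ℕ} {C : AddSubgroup (Fin n → ZMod (2 ^ m))}

lemma mem_deSub_iff (hm : 0 < m) {c : Fin n → ZMod (2 ^ m)} :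
    c ∈ deSub m n C ↔ c ∈ C ∧ (2 : ℤ) ^ (m + 1) ∣ liftDot c c := by
  have h := wtEv_modEq_liftDot (dvd_pow_self 2 hm.ne') c
  push_cast at h
  rw [← pow_succ'] at h
  rw [deSub, Set.mem_ofPred_eq, ← h.dvd_iff]
  exact_mod_cast Iff.rfl

lemma liftDot_self_modEq_of_notMem_deSub (hm : 0 < m)
    (hC : (C : Set (Fin n → ZMod (2 ^ m))) ⊆ dualCode C) {c : Fin n → ZMod (2 ^ m)} (hc : c ∈ C)
    (hc0 : c ∉ deSub m n C) : liftDot c c ≡ 2 ^ m [ZMOD 2 ^ (m + 1)] := by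
  obtain ⟨k, hk⟩ := (dotp_eq_zero_iff_dvd_liftDot c c).1 (hC hc c hc)
  push_cast at hk
  rcases Int.even_or_odd k with ⟨r, rfl⟩ | ⟨r, rfl⟩
  · exact absurd ((mem_deSub_iff hm).2 ⟨hc, r, by rw [hk]; ring⟩) hc0
  · exact Int.modEq_iff_dvd.2 ⟨-r, by rw [hk]; ring⟩

lemma add_mem_deSub_of_notMem_deSub (hm : 0 < m)
    (hC : (C : Set (Fin n → ZMod (2 ^ m))) ⊆ dualCode C) {a b : Fin n → ZMod (2 ^ m)} (ha : a ∈ C)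
    (ha0 : a ∉ deSub m n C) (hb : b ∈ C) (hb0 : b ∉ deSub m n C) : a + b ∈ deSub m n C := by
  refine (mem_deSub_iff hm).2 ⟨C.add_mem ha hb, ?_⟩
  have hab := liftDot_add_self_modEq (dvd_pow_self 2 hm.ne') a b
  push_cast [← pow_succ'] at hab
  obtain ⟨e, he⟩ := (dotp_eq_zero_iff_dvd_liftDot a b).1 (hC hb a ha)
  push_cast at he
  have hsum := ((liftDot_self_modEq_of_notMem_deSub hm hC ha ha0).add
    (liftDot_self_modEq_of_notMem_deSub hm hC hb hb0)).add_right (2 * liftDot a b)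
  rw [hab.dvd_iff, hsum.dvd_iff, he]
  exact ⟨1 + e, by ring⟩

end SelfOrthogonal

section CharacteristicVector

variable {m n : ℕ} {C : AddSubgroup (Fin n → ZMod (2 ^ m))} {s : Fin n → ZMod (2 ^ m)}

lemma dotp_eq_two_pow_pred_of_notMem_deSub (hm : 0 < m)
    (hC : (C : Set (Fin n → ZMod (2 ^ m))) = dualCode C) (hs : s ∈ dualCode (deSub m n C))
    (hsC : s ∉ C) {t : Fin n → ZMod (2 ^ m)} (ht : t ∈ C) (ht0 : t ∉ deSub m n C) :
    dotp t s = 2 ^ (m - 1) := by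
  have hCC : (C : Set (Fin n → ZMod (2 ^ m))) ⊆ dualCode C := hC.le
  refine ZMod.eq_two_pow_pred_of_add_self_eq_zero ?_ fun h0 => hsC ?_
  · rw [← dotp_add_left]
    exact hs _ (add_mem_deSub_of_notMem_deSub hm hCC ht ht0 ht ht0)
  · rw [← SetLike.mem_coe, hC]
    intro c hc
    by_cases hc0 : c ∈ deSub m n C
    · exact hs c hc0
    · have h := hs _ (add_mem_deSub_of_notMem_deSub hm hCC hc hc0 ht ht0)
      rwa [dotp_add_left, h0, add_zero] at h

lemma two_pow_succ_dvd_liftDot_self_add (hm : 0 < m)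
    (hC : (C : Set (Fin n → ZMod (2 ^ m))) = dualCode C) (hs : s ∈ dualCode (deSub m n C))
    (hsC : s ∉ C) {c : Fin n → ZMod (2 ^ m)} (hc : c ∈ C) :
    (2 : ℤ) ^ (m + 1) ∣ liftDot c c + 2 * liftDot s c := by
  by_cases hc0 : c ∈ deSub m n C
  · obtain ⟨e, he⟩ := (dotp_eq_zero_iff_dvd_liftDot c s).1 (hs c hc0)
    push_cast at he
    rw [liftDot_comm s c, he]
    exact dvd_add ((mem_deSub_iff hm).1 hc0).2 ⟨e, by ring⟩
  · have hcs : liftDot c s ≡ 2 ^ (m - 1) [ZMOD 2 ^ m] := by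
      have h := (liftDot_modEq_iff c s (2 ^ (m - 1))).2 (by
        rw [dotp_eq_two_pow_pred_of_notMem_deSub hm hC hs hsC hc hc0]; push_cast; rfl)
      exact_mod_cast h
    have hcs2 := hcs.mul_left' (c := 2)
    rw [← pow_succ', ← pow_succ', Nat.sub_add_cancel hm, liftDot_comm c s] at hcs2
    have h := (liftDot_self_modEq_of_notMem_deSub hm hC.le hc hc0).add hcs2
    rw [h.dvd_iff]
    exact ⟨1, by ring⟩

lemma expDyadic_liftDot_self_add (hm : 0 < m) {c : Fin n → ZMod (2 ^ m)}
    (hsc : (2 : ℤ) ^ (m + 1) ∣ liftDot c c + 2 * liftDot s c) (x : Fin n → ZMod (2 ^ m)) :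
    expDyadic (m + 1) (liftDot (x + c) (x + c))
      = expDyadic (m + 1) (liftDot x x) * ZMod.stdAddChar (dotp (x - s) c) := by
  have h := liftDot_add_self_modEq (dvd_pow_self 2 hm.ne') x c
  push_cast [← pow_succ'] at h
  have h' : liftDot x x + liftDot c c + 2 * liftDot x c
      ≡ liftDot x x + 2 * (liftDot x c - liftDot s c) [ZMOD 2 ^ (m + 1)] := by
    refine Int.modEq_iff_dvd.2 ?_
    rw [show liftDot x x + 2 * (liftDot x c - liftDot s c) - (liftDot x x + liftDot c c
      + 2 * liftDot x c) = -(liftDot c c + 2 * liftDot s c) by ring]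
    exact hsc.neg_right
  rw [expDyadic_eq_of_modEq (h.trans h'), expDyadic_add, expDyadic_succ_two_mul]
  congr 1
  rw [expDyadic, Int.cast_sub, intCast_liftDot, intCast_liftDot, dotp_sub_left]

lemma sum_stdAddChar_dotp_of_notMem [Fintype C]
    (hC : (C : Set (Fin n → ZMod (2 ^ m))) = dualCode C) {v : Fin n → ZMod (2 ^ m)} (hv : v ∉ C) :
    ∑ c : C, ZMod.stdAddChar (dotp v c) = 0 := by
  let f : C →+ ZMod (2 ^ m) := AddMonoidHom.mk' (fun c => dotp v c) fun a b => dotp_add_right _ _ _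
  refine (AddChar.sum_eq_zero_iff_ne_zero (ψ := ZMod.stdAddChar.compAddMonoidHom f)).2 ?_
  rw [AddChar.ne_zero_iff]
  obtain ⟨c, hc, hcv⟩ : ∃ c ∈ C, dotp c v ≠ 0 := by
    rw [← SetLike.mem_coe, hC] at hv
    simpa [dualCode] using hv
  refine ⟨⟨c, hc⟩, fun h => hcv ?_⟩
  rw [AddChar.compAddMonoidHom_apply, ← AddChar.map_zero_eq_one (ZMod.stdAddChar (N := 2 ^ m)),
    ZMod.injective_stdAddChar.eq_iff] at h
  rw [dotp_comm]
  exact h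

lemma sum_expDyadic_liftDot_self_eq (hm : 0 < m)
    (hC : (C : Set (Fin n → ZMod (2 ^ m))) = dualCode C)
    (hs : ∀ c ∈ C, (2 : ℤ) ^ (m + 1) ∣ liftDot c c + 2 * liftDot s c) :
    ∑ u : Fin n → ZMod (2 ^ m), expDyadic (m + 1) (liftDot u u)
      = Nat.card C * expDyadic (m + 1) (liftDot s s) := by
  classical
  set G := ∑ u : Fin n → ZMod (2 ^ m), expDyadic (m + 1) (liftDot u u)
  have hshift : ∀ c : Fin n → ZMod (2 ^ m),
      ∑ u : Fin n → ZMod (2 ^ m), expDyadic (m + 1) (liftDot (s + u + c) (s + u + c)) = G :=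
    fun c => Fintype.sum_equiv (Equiv.addRight (s + c)) _ _ fun u => by
      rw [Equiv.coe_addRight, add_comm s u, add_assoc]
  have hconst : ∀ u ∈ C, expDyadic (m + 1) (liftDot (s + u) (s + u))
      = expDyadic (m + 1) (liftDot s s) := fun u hu => by
    rw [expDyadic_liftDot_self_add hm (hs u hu), sub_self, show dotp 0 u = 0 from zero_dotProduct u,
      AddChar.map_zero_eq_one, mul_one]
  have hcard : (Nat.card C : ℂ) ≠ 0 := Nat.cast_ne_zero.2 Nat.card_pos.ne'
  refine mul_left_cancel₀ hcard ?_
  calc (Nat.card C : ℂ) * G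
        = ∑ c : C, ∑ u, expDyadic (m + 1) (liftDot (s + u + c.1) (s + u + c.1)) := by
        simp only [hshift, sum_const, card_univ, nsmul_eq_mul, Nat.card_eq_fintype_card]
    _ = ∑ c : C, ∑ u, expDyadic (m + 1) (liftDot (s + u) (s + u)) * ZMod.stdAddChar (dotp u c) := by
        refine sum_congr rfl fun c _ => sum_congr rfl fun u _ => ?_
        rw [expDyadic_liftDot_self_add hm (hs c c.2), add_sub_cancel_left]
    _ = ∑ u, expDyadic (m + 1) (liftDot (s + u) (s + u)) * ∑ c : C, ZMod.stdAddChar (dotp u c) := by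
        rw [sum_comm]
        simp only [mul_sum]
    _ = ∑ u, if u ∈ C then (Nat.card C : ℂ) * expDyadic (m + 1) (liftDot s s) else 0 := by
        refine sum_congr rfl fun u _ => ?_
        by_cases hu : u ∈ C
        · have h1 : ∀ c : C, ZMod.stdAddChar (dotp u c) = 1 := fun c => by
            rw [dotp_comm, hC.le hu c c.2, AddChar.map_zero_eq_one]
          rw [if_pos hu, hconst u hu, sum_congr rfl fun c _ => h1 c, sum_const, card_univ,
            nsmul_one, Nat.card_eq_fintype_card, mul_comm]
        · rw [if_neg hu, sum_stdAddChar_dotp_of_notMem hC hu, mul_zero]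
    _ = _ := by
        rw [sum_ite, sum_const_zero, add_zero, sum_const, nsmul_eq_mul, ← Fintype.card_subtype,
          Nat.card_eq_fintype_card]

end CharacteristicVector

lemma ZMod.sum_val_eq_sum_range {M : Type*} [AddCommMonoid M] {N : ℕ} [NeZero N] (f : ℕ → M) :
    ∑ x : ZMod N, f x.val = ∑ i ∈ range N, f i :=
  sum_nbij' ZMod.val (fun i => (i : ZMod N)) (fun x _ => mem_range.2 (ZMod.val_lt x))
    (fun _ _ => mem_univ _) (fun x _ => ZMod.natCast_zmod_val x)
    (fun _ hi => ZMod.val_cast_of_lt (mem_range.1 hi)) fun _ _ => rfl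

lemma sum_expDyadic_liftDot_self_eq_pow (m n : ℕ) :
    ∑ u : Fin n → ZMod (2 ^ m), expDyadic (m + 1) (liftDot u u) = dyadicGaussSum m ^ n := by
  simp only [liftDot, expDyadic_sum, ← sq]
  rw [← Fintype.prod_sum fun (_ : Fin n) (x : ZMod (2 ^ m)) => expDyadic (m + 1) ((x.val : ℤ) ^ 2),
    prod_const, card_univ, Fintype.card_fin, dyadicGaussSum,
    ZMod.sum_val_eq_sum_range (fun i => expDyadic (m + 1) ((i : ℤ) ^ 2))]

lemma ZMod.stdAddChar_two_pow_pred {m : ℕ} (hm : 0 < m) :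
    ZMod.stdAddChar (2 ^ (m - 1) : ZMod (2 ^ m)) = -1 := by
  have h := expDyadic_succ_two_pow (m - 1)
  rw [Nat.sub_add_cancel hm, expDyadic] at h
  exact_mod_cast h

lemma dotp_self_eq_two_pow_pred {m n : ℕ} {C : AddSubgroup (Fin n → ZMod (2 ^ m))}
    {s : Fin n → ZMod (2 ^ m)} (hm : 0 < m) (hn : n % 4 = 2)
    (hC : (C : Set (Fin n → ZMod (2 ^ m))) = dualCode C) (hs : s ∈ dualCode (deSub m n C))
    (hsC : s ∉ C) : dotp s s = 2 ^ (m - 1) := by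
  have hG := sum_expDyadic_liftDot_self_eq hm hC
    fun c hc => two_pow_succ_dvd_liftDot_self_add hm hC hs hsC hc
  rw [sum_expDyadic_liftDot_self_eq_pow] at hG
  set ψ := ZMod.stdAddChar (dotp s s)
  have hsq : (Nat.card C : ℂ) ^ 2 * ψ = -2 ^ (m * n) := by
    have he : expDyadic (m + 1) (liftDot s s) ^ 2 = ψ := by
      rw [sq, ← expDyadic_add, ← two_mul, expDyadic_succ_two_mul, expDyadic, intCast_liftDot]
    obtain ⟨r, rfl⟩ : ∃ r, n = 4 * r + 2 := ⟨n / 4, by omega⟩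
    rw [← he, ← mul_pow, ← hG, ← pow_mul, mul_comm, pow_mul, dyadicGaussSum_sq hm, mul_pow,
      ← pow_mul, pow_add I, pow_mul I 4 r, I_pow_four, I_sq]
    ring
  have hcard : (Nat.card C : ℂ) ^ 2 = 2 ^ (m * n) := by
    have h := congrArg norm hsq
    simp only [norm_mul, norm_pow, norm_neg, ψ, ZMod.stdAddChar_apply, Circle.norm_coe,
      mul_one, Complex.norm_natCast, Complex.norm_ofNat] at h
    exact_mod_cast h
  rw [hcard, ← neg_one_mul, mul_comm] at hsq
  exact ZMod.injective_stdAddChar <|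
    (mul_right_cancel₀ (pow_ne_zero _ two_ne_zero) hsq).trans (ZMod.stdAddChar_two_pow_pred hm).symm

theorem orth_relations_n_two_mod_four_general (m n : ℕ) (hm : 0 < m) (hn : n % 4 = 2)
    (C : AddSubgroup (Fin n → ZMod (2 ^ m)))
    (hC : (C : Set (Fin n → ZMod (2 ^ m))) = dualCode (C : Set (Fin n → ZMod (2 ^ m))))
    (t s : Fin n → ZMod (2 ^ m)) (ht : t ∈ C) (ht0 : t ∉ deSub m n C)
    (hs : s ∈ dualCode (deSub m n C)) (hsC : s ∉ C) :
    (∀ x ∈ (s + ·) '' deSub m n C, ∀ y ∈ (s + ·) '' deSub m n C,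
      dotp x y = (2 ^ (m - 1) : ZMod (2 ^ m))) ∧
    (∀ x ∈ (s + ·) '' deSub m n C, ∀ y ∈ (t + ·) '' deSub m n C,
      dotp x y = (2 ^ (m - 1) : ZMod (2 ^ m))) ∧
    (∀ x ∈ (s + ·) '' deSub m n C, ∀ y ∈ (s + t + ·) '' deSub m n C,
      dotp x y = 0) ∧
    (∀ x ∈ (t + ·) '' deSub m n C, ∀ y ∈ (t + ·) '' deSub m n C,
      dotp x y = 0) := by
  have hCC : ∀ x ∈ C, ∀ y ∈ C, dotp x y = 0 := fun x hx y hy => hC.le hy x hx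
  have hsa : ∀ a ∈ deSub m n C, dotp s a = 0 := fun a ha => (dotp_comm s a).trans (hs a ha)
  have hss := dotp_self_eq_two_pow_pred hm hn hC hs hsC
  have hst : dotp s t = 2 ^ (m - 1) :=
    (dotp_comm s t).trans (dotp_eq_two_pow_pred_of_notMem_deSub hm hC hs hsC ht ht0)
  refine ⟨?_, ?_, ?_, ?_⟩ <;> rintro _ ⟨a, ha, rfl⟩ _ ⟨b, hb, rfl⟩
  · rw [dotp_add_add_eq (hsa b hb) (hs a ha) (hCC a ha.1 b hb.1), hss]
  · rw [dotp_add_add_eq (hsa b hb) (hCC a ha.1 t ht) (hCC a ha.1 b hb.1), hst]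
  · have has : dotp a (s + t) = 0 := by rw [dotp_add_right, hs a ha, hCC a ha.1 t ht, add_zero]
    rw [dotp_add_add_eq (hsa b hb) has (hCC a ha.1 b hb.1), dotp_add_right, hss, hst,
      ZMod.two_pow_pred_add_self hm]
  · rw [dotp_add_add_eq (hCC t ht b hb.1) (hCC a ha.1 t ht) (hCC a ha.1 b hb.1), hCC t ht t ht]

theorem orth_relations_n_two_mod_four (m n : ℕ) (hm : 0 < m) (hn : n % 4 = 2)
    (C : AddSubgroup (Fin n → ZMod (2 ^ m)))
    (hC : (C : Set (Fin n → ZMod (2 ^ m))) = dualCode (C : Set (Fin n → ZMod (2 ^ m))))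
    (hTypeI : ∃ c ∈ C, ¬ 2 ^ (m + 1) ∣ wtEv c)
    (t s : Fin n → ZMod (2 ^ m)) (ht : t ∈ C) (ht0 : t ∉ deSub m n C)
    (hs : s ∈ dualCode (deSub m n C)) (hsC : s ∉ C) :
    (∀ x ∈ (s + ·) '' deSub m n C, ∀ y ∈ (s + ·) '' deSub m n C,
      dotp x y = (2 ^ (m - 1) : ZMod (2 ^ m))) ∧
    (∀ x ∈ (s + ·) '' deSub m n C, ∀ y ∈ (t + ·) '' deSub m n C,
      dotp x y = (2 ^ (m - 1) : ZMod (2 ^ m))) ∧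
    (∀ x ∈ (s + ·) '' deSub m n C, ∀ y ∈ (s + t + ·) '' deSub m n C,
      dotp x y = 0) ∧
    (∀ x ∈ (t + ·) '' deSub m n C, ∀ y ∈ (t + ·) '' deSub m n C,
      dotp x y = 0) :=
  orth_relations_n_two_mod_four_general m n hm hn C hC t s ht ht0 hs hsC
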